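/- The total number of cyclic subgroups of C_{2^a} × C_{2^b} × C_{2^c} × C_{2^d} with a ≥ b ≥ c ≥ d ≥ 1 equals (15/7)(8^d − 1) + (7/3)·2^d(4^c − 4^d) + 3·2^(c+d)(2^b − 2^c) + (a − b)·2^(b+c+d) + 1. -/

import Mathlib

/-!
A cyclic group of order `n` has exactly `φ n` generators, so the number of cyclic subgroups of
order `2 ^ (k + 1)` is the number of elements of that order divided by `φ (2 ^ (k + 1)) = 2 ^ k`.
Those elements are the ones killed by `2 ^ (k + 1)` but not by `2 ^ k`, and in
`C_{2^a} × C_{2^b} × C_{2^c} × C_{2^d}` the elements killed by `2 ^ k` number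
`2 ^ (min a k + min b k + min c k + min d k)`. On each of the ranges `k < d`, `d ≤ k < c`,
`c ≤ k < b`, `b ≤ k < a` this exponent is linear in `k`, so the counts form a geometric
progression; summing the four progressions, plus the trivial subgroup, gives the formula.
-/

open Finset AddSubgroup Nat

theorem Nat.gcd_pow_pow (p m n : ℕ) : (p ^ m).gcd (p ^ n) = p ^ min m n := by
  rcases le_total m n with h | h
  · rw [min_eq_left h, Nat.gcd_eq_left (pow_dvd_pow p h)]
  · rw [min_eq_right h, Nat.gcd_eq_right (pow_dvd_pow p h)]

theorem Nat.sub_one_mul_sum_Ico_pow (q : ℕ) {m n : ℕ} (h : m ≤ n) :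
    (q - 1) * ∑ k ∈ Ico m n, q ^ k = q ^ n - q ^ m := by
  rcases q.eq_zero_or_pos with rfl | hq
  · rcases n.eq_zero_or_pos with rfl | hn
    · obtain rfl : m = 0 := by omega
      simp
    · simp [zero_pow hn.ne']
  · have := geom_sum_Ico_mul (q : ℤ) h
    zify [hq, Nat.pow_le_pow_right hq h]
    linarith

section Torsion

variable {G : Type*} [AddMonoid G] [Fintype G] [DecidableEq G]

theorem card_filter_addOrderOf_eq_prime_pow_succ {p : ℕ} (hp : p.Prime) (k : ℕ) :
    #{x : G | addOrderOf x = p ^ (k + 1)} =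
      #{x : G | p ^ (k + 1) • x = 0} - #{x : G | p ^ k • x = 0} := by
  rw [← sum_card_addOrderOf_eq_card_nsmul_eq_zero (pow_ne_zero _ hp.ne_zero),
    ← sum_card_addOrderOf_eq_card_nsmul_eq_zero (pow_ne_zero _ hp.ne_zero),
    Nat.sum_divisors_prime_pow hp, Nat.sum_divisors_prime_pow hp, sum_range_succ _ (k + 1),
    Nat.add_sub_cancel_left]

theorem card_filter_nsmul_eq_zero_prod {H : Type*} [AddMonoid H] [Fintype H] [DecidableEq H]
    (d : ℕ) : #{x : G × H | d • x = 0} = #{x : G | d • x = 0} * #{y : H | d • y = 0} := by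
  rw [← card_product, ← filter_product, univ_product_univ]
  simp only [Prod.ext_iff, Prod.smul_fst, Prod.smul_snd, Prod.fst_zero, Prod.snd_zero]

end Torsion

theorem ZMod.card_filter_nsmul_eq_zero (n d : ℕ) [NeZero n] :
    #{x : ZMod n | d • x = 0} = n.gcd d := by
  have h := IsAddCyclic.card_nsmulAddMonoidHom_ker (ZMod n) d
  rw [Nat.card_zmod] at h
  rw [← h, ← Fintype.card_subtype, ← Nat.card_eq_fintype_card]
  rfl

section CyclicSubgroups

variable (G : Type*) [AddGroup G] [Fintype G]

open scoped Classical in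
noncomputable def cyclicAddSubgroups : Finset (AddSubgroup G) :=
  univ.image zmultiples

variable {G}

theorem mem_cyclicAddSubgroups {H : AddSubgroup G} :
    H ∈ cyclicAddSubgroups G ↔ ∃ x, zmultiples x = H := by
  simp [cyclicAddSubgroups]

theorem coe_cyclicAddSubgroups :
    (cyclicAddSubgroups G : Set (AddSubgroup G)) = {H | ∃ x, H = zmultiples x} := by
  ext H
  simp [mem_cyclicAddSubgroups, eq_comm]

open scoped Classical in
theorem card_filter_zmultiples_eq (x₀ : G) :
    #{x | zmultiples x = zmultiples x₀} = φ (addOrderOf x₀) := by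
  set H := zmultiples x₀
  have hgen (y : H) : zmultiples (y : G) = H ↔ addOrderOf y = Nat.card H := by
    rw [← addOrderOf_coe, ← Nat.card_zmultiples]
    exact ⟨fun h ↦ by rw [h], fun h ↦ eq_of_le_of_card_ge (zmultiples_le_of_mem y.2) h.ge⟩
  let e : {y : H // addOrderOf y = Nat.card H} ≃ {x : G // zmultiples x = H} :=
    (Equiv.subtypeEquivRight fun y ↦ (hgen y).symm).trans
      (Equiv.subtypeSubtypeEquivSubtype (p := (· ∈ H)) (q := (zmultiples · = H))
        fun h ↦ h ▸ mem_zmultiples _)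
  rw [← Fintype.card_subtype, ← Fintype.card_congr e, Fintype.card_subtype,
    IsAddCyclic.card_addOrderOf_eq_totient (Nat.card_eq_fintype_card (α := H)).dvd,
    Nat.card_zmultiples]

theorem card_filter_addOrderOf_eq (n : ℕ) :
    #{x : G | addOrderOf x = n} =
      φ n * #{H ∈ cyclicAddSubgroups G | Nat.card (H : AddSubgroup G) = n} := by
  classical
  rw [card_eq_sum_card_fiberwise (f := zmultiples)
    (t := {H ∈ cyclicAddSubgroups G | Nat.card (H : AddSubgroup G) = n})]
  · rw [mul_comm]
    refine sum_const_nat fun H hH ↦ ?_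
    obtain ⟨hH, hcard⟩ := mem_filter.mp hH
    obtain ⟨x₀, rfl⟩ := mem_cyclicAddSubgroups.mp hH
    rw [← hcard, Nat.card_zmultiples, ← card_filter_zmultiples_eq, filter_filter]
    congr 1
    ext x
    simp only [mem_filter, mem_univ, true_and, and_iff_right_iff_imp]
    intro h
    rw [← Nat.card_zmultiples, h, Nat.card_zmultiples]
  · intro x hx
    rw [mem_coe, mem_filter] at hx ⊢
    exact ⟨mem_cyclicAddSubgroups.mpr ⟨x, rfl⟩, by rw [Nat.card_zmultiples, hx.2]⟩

theorem card_cyclicAddSubgroups_eq_sum_divisors {m : ℕ} (hm : m ≠ 0)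
    (hG : ∀ x : G, addOrderOf x ∣ m) :
    #(cyclicAddSubgroups G) = ∑ n ∈ m.divisors, #{x : G | addOrderOf x = n} / φ n := by
  rw [card_eq_sum_card_fiberwise (f := fun H : AddSubgroup G ↦ Nat.card H) (t := m.divisors)]
  · refine sum_congr rfl fun n hn ↦ ?_
    rw [card_filter_addOrderOf_eq, Nat.mul_div_cancel_left _ (totient_pos.mpr
      (pos_of_mem_divisors hn))]
  · intro H hH
    obtain ⟨x, rfl⟩ := mem_cyclicAddSubgroups.mp hH
    rw [mem_coe, Nat.mem_divisors]
    exact ⟨by simpa only [Nat.card_zmultiples] using hG x, hm⟩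

theorem card_cyclicAddSubgroups_of_addOrderOf_dvd_prime_pow [DecidableEq G] {p a : ℕ}
    (hp : p.Prime) (hG : ∀ x : G, addOrderOf x ∣ p ^ a) :
    #(cyclicAddSubgroups G) = 1 + ∑ k ∈ range a,
      (#{x : G | p ^ (k + 1) • x = 0} - #{x : G | p ^ k • x = 0}) / (p ^ k * (p - 1)) := by
  rw [card_cyclicAddSubgroups_eq_sum_divisors (pow_ne_zero a hp.ne_zero) hG,
    Nat.sum_divisors_prime_pow hp, sum_range_succ', add_comm]
  congr 1
  · simp [filter_eq']
  · refine sum_congr rfl fun k _ ↦ ?_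
    rw [card_filter_addOrderOf_eq_prime_pow_succ hp, totient_prime_pow_succ hp]

end CyclicSubgroups

theorem sum_Ico_two_pow_sub_div_of_linear {s : ℕ → ℕ} {j e m n : ℕ} (hj : 1 ≤ j)
    (hs : ∀ k ∈ Icc m n, s k = j * k + e) :
    ∑ k ∈ Ico m n, (2 ^ s (k + 1) - 2 ^ s k) / 2 ^ k =
      (2 ^ j - 1) * 2 ^ e * ∑ k ∈ Ico m n, (2 ^ (j - 1)) ^ k := by
  rw [mul_sum]
  refine sum_congr rfl fun k hk ↦ ?_
  obtain ⟨hmk, hkn⟩ := mem_Ico.mp hk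
  rw [hs k (mem_Icc.mpr ⟨hmk, hkn.le⟩), hs (k + 1) (mem_Icc.mpr ⟨by omega, hkn⟩)]
  refine Nat.div_eq_of_eq_mul_left (by positivity) ?_
  obtain ⟨i, rfl⟩ : ∃ i, j = i + 1 := ⟨j - 1, by omega⟩
  rw [Nat.add_sub_cancel, mul_assoc, mul_assoc, Nat.sub_one_mul]
  ring_nf

theorem one_add_sum_range_two_pow_sub_div {a b c d : ℕ} {s : ℕ → ℕ} (hdc : d ≤ c)
    (hcb : c ≤ b) (hba : b ≤ a) (hs : ∀ k, s k = min a k + min b k + min c k + min d k) :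
    1 + ∑ k ∈ range a, (2 ^ s (k + 1) - 2 ^ s k) / 2 ^ k =
      15 * (8 ^ d - 1) / 7 + 7 * (2 ^ d * (4 ^ c - 4 ^ d)) / 3 +
        3 * 2 ^ (c + d) * (2 ^ b - 2 ^ c) + (a - b) * 2 ^ (b + c + d) + 1 := by
  rw [range_eq_Ico, ← sum_Ico_consecutive _ (zero_le b) hba,
    ← sum_Ico_consecutive _ (zero_le c) hcb, ← sum_Ico_consecutive _ (zero_le d) hdc,
    sum_Ico_two_pow_sub_div_of_linear (j := 4) (e := 0) (by norm_num)
      (fun k hk ↦ by rw [hs]; simp only [mem_Icc] at hk; omega),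
    sum_Ico_two_pow_sub_div_of_linear (j := 3) (e := d) (by norm_num)
      (fun k hk ↦ by rw [hs]; simp only [mem_Icc] at hk; omega),
    sum_Ico_two_pow_sub_div_of_linear (j := 2) (e := c + d) (by norm_num)
      (fun k hk ↦ by rw [hs]; simp only [mem_Icc] at hk; omega),
    sum_Ico_two_pow_sub_div_of_linear (j := 1) (e := b + c + d) le_rfl
      (fun k hk ↦ by rw [hs]; simp only [mem_Icc] at hk; omega)]
  have h8 := Nat.sub_one_mul_sum_Ico_pow 8 (zero_le d)
  have h4 := Nat.sub_one_mul_sum_Ico_pow 4 hdc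
  have h2 := Nat.sub_one_mul_sum_Ico_pow 2 hcb
  norm_num at h8 h4 h2 ⊢
  rw [← h8, ← h4, ← h2, mul_left_comm 15 7, Nat.mul_div_cancel_left _ (by norm_num),
    mul_left_comm (2 ^ d) 3, mul_left_comm 7 3, Nat.mul_div_cancel_left _ (by norm_num)]
  ring

theorem addOrderOf_dvd_two_pow (a b c d : ℕ) (hdc : d ≤ c) (hcb : c ≤ b) (hba : b ≤ a)
    (x : ZMod (2 ^ a) × ZMod (2 ^ b) × ZMod (2 ^ c) × ZMod (2 ^ d)) : addOrderOf x ∣ 2 ^ a := by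
  have h {m : ℕ} (hm : m ≤ a) (y : ZMod (2 ^ m)) : addOrderOf y ∣ 2 ^ a :=
    (ZMod.card (2 ^ m) ▸ addOrderOf_dvd_card).trans (pow_dvd_pow 2 hm)
  simp only [Prod.addOrderOf]
  exact Nat.lcm_dvd (h le_rfl _) (Nat.lcm_dvd (h hba _) (Nat.lcm_dvd (h (hcb.trans hba) _)
    (h (hdc.trans (hcb.trans hba)) _)))

theorem card_filter_two_pow_nsmul_eq_zero (a b c d k : ℕ) :
    #{x : ZMod (2 ^ a) × ZMod (2 ^ b) × ZMod (2 ^ c) × ZMod (2 ^ d) | 2 ^ k • x = 0} =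
      2 ^ (min a k + min b k + min c k + min d k) := by
  simp only [card_filter_nsmul_eq_zero_prod, ZMod.card_filter_nsmul_eq_zero, Nat.gcd_pow_pow,
    pow_add, mul_assoc]

theorem total_cyclic_subgroups_four_factors_general (a b c d : ℕ) (hdc : d ≤ c)
    (hcb : c ≤ b) (hba : b ≤ a) :
    Set.ncard {H : AddSubgroup (ZMod (2 ^ a) × ZMod (2 ^ b) × ZMod (2 ^ c) × ZMod (2 ^ d)) |
      ∃ x, H = AddSubgroup.zmultiples x} =
      15 * (8 ^ d - 1) / 7 + 7 * (2 ^ d * (4 ^ c - 4 ^ d)) / 3 +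
        3 * 2 ^ (c + d) * (2 ^ b - 2 ^ c) + (a - b) * 2 ^ (b + c + d) + 1 := by
  rw [← coe_cyclicAddSubgroups, Set.ncard_coe_finset,
    card_cyclicAddSubgroups_of_addOrderOf_dvd_prime_pow Nat.prime_two
      (addOrderOf_dvd_two_pow a b c d hdc hcb hba)]
  simp only [card_filter_two_pow_nsmul_eq_zero, Nat.add_one_sub_one, mul_one]
  exact one_add_sum_range_two_pow_sub_div (s := fun k ↦ min a k + min b k + min c k + min d k)
    hdc hcb hba fun k ↦ rfl

/-- The total number of cyclic subgroups of `C_{2^a} × C_{2^b} × C_{2^c} × C_{2^d}` with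
`a ≥ b ≥ c ≥ d ≥ 1` is
`(15/7)(8^d - 1) + (7/3)·2^d(4^c - 4^d) + 3·2^(c+d)(2^b - 2^c) + (a-b)·2^(b+c+d) + 1`. -/
theorem total_cyclic_subgroups_four_factors (a b c d : ℕ) (hd : 1 ≤ d) (hdc : d ≤ c)
    (hcb : c ≤ b) (hba : b ≤ a) :
    Set.ncard {H : AddSubgroup (ZMod (2 ^ a) × ZMod (2 ^ b) × ZMod (2 ^ c) × ZMod (2 ^ d)) |
      ∃ x, H = AddSubgroup.zmultiples x} =
      15 * (8 ^ d - 1) / 7 + 7 * (2 ^ d * (4 ^ c - 4 ^ d)) / 3 +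
        3 * 2 ^ (c + d) * (2 ^ b - 2 ^ c) + (a - b) * 2 ^ (b + c + d) + 1 :=
  total_cyclic_subgroups_four_factors_general a b c d hdc hcb hba
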